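/- arXiv:2412.17751 — 2 statements merged into one kernel-verified Lean document; each statement's English description precedes it below -/
import Mathlib

section
/- For any algorithm performing a sequence of informative updates (each removing at least mass c) on a distribution D over edges, and which declares the target edge as soon as its posterior reaches 1, the expected number of updates until the target edge (sampled from D) is declared is at most H(X)/log(1/(1-c)), where H(X) = Σ_e p(e) log(1/p(e)). -/
open Finset

/-- For any algorithm performing informative updates (each removing posterior mass at
least `c` of non-target edges) and declaring the target edge as soon as its posterior
reaches 1, the expected number of updates until the target (sampled from `p`) is
declared is at most `H(X) / log₂(1/(1-c))`, where `H(X) = Σ_e p(e) log₂(1/p(e))`. -/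
theorem stmt1 {E : Type*} [Fintype E] (p : E → ℝ) (hp : ∀ e, 0 ≤ p e)
    (hsum : ∑ e, p e = 1)
    (c : ℝ) (hc0 : 0 < c) (hc1 : c < 1)
    -- `q e i` is the posterior distribution after `i` updates when `e` is the target
    (q : E → ℕ → E → ℝ)
    (hinit : ∀ e, q e 0 = p)
    (hdist : ∀ e i, (∀ f, 0 ≤ q e i f) ∧ ∑ f, q e i f = 1)
    -- `N e` is the number of updates performed when `e` is the target
    (N : E → ℕ)
    (hstep : ∀ e, 0 < p e → ∀ i < N e, ∃ S : Finset E, e ∉ S ∧ c ≤ ∑ f ∈ S, q e i f ∧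
      (∀ f ∈ S, q e (i + 1) f = 0) ∧
      (∀ f ∉ S, q e (i + 1) f = q e i f / (1 - ∑ g ∈ S, q e i g)))
    -- the algorithm declares the target exactly when its posterior first reaches 1
    (hdeclare : ∀ e, 0 < p e → q e (N e) e = 1 ∧ ∀ i < N e, q e i e < 1) :
    ∑ e, p e * (N e : ℝ) ≤
      (∑ e, p e * Real.logb 2 (1 / p e)) / Real.logb 2 (1 / (1 - c)) := by
  have h1c : 0 < 1 - c := by linarith
  set L := Real.logb 2 (1 / (1 - c)) with hL
  have hLval : L = -Real.logb 2 (1 - c) := by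
    rw [hL, one_div, Real.logb_inv]
  have hLpos : 0 < L := by
    rw [hLval]
    have := Real.logb_neg (b := 2) (by norm_num) h1c (by linarith : (1:ℝ) - c < 1)
    linarith
  classical
  rw [le_div_iff₀ hLpos, Finset.sum_mul]
  apply Finset.sum_le_sum
  intro e _
  rcases eq_or_lt_of_le (hp e) with hpe | hpe
  · simp [← hpe]
  · -- key: p e ≤ (1-c)^i * q e i e for i ≤ N e
    have key : ∀ i, i ≤ N e → p e ≤ (1 - c) ^ i * q e i e := by
      intro i
      induction i with
      | zero => intro _; simp [hinit e]
      | succ i ih =>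
        intro hi
        have hiN : i < N e := Nat.lt_of_lt_of_le (Nat.lt_succ_self i) hi
        have ihh := ih (le_of_lt hiN)
        obtain ⟨S, heS, hcS, _, hrest⟩ := hstep e hpe i hiN
        set s := ∑ g ∈ S, q e i g with hs
        have hqpos : 0 < q e i e := by
          have hpow : (0:ℝ) < (1 - c) ^ i := pow_pos h1c i
          nlinarith [pow_pos h1c i]
        have hsbound : q e i e + s ≤ 1 := by
          have hsub : insert e S ⊆ Finset.univ := Finset.subset_univ _
          have := Finset.sum_le_sum_of_subset_of_nonneg hsub
            (fun f _ _ => (hdist e i).1 f)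
          rw [Finset.sum_insert heS, (hdist e i).2] at this
          exact this
        have h1s : 0 < 1 - s := by linarith
        have h1sc : 1 - s ≤ 1 - c := by linarith
        have hnext : q e (i + 1) e = q e i e / (1 - s) := hrest e heS
        have hmono : q e i e / (1 - c) ≤ q e i e / (1 - s) :=
          div_le_div_of_nonneg_left (le_of_lt hqpos) h1s h1sc
        calc p e ≤ (1 - c) ^ i * q e i e := ihh
          _ = (1 - c) ^ (i + 1) * (q e i e / (1 - c)) := by
              field_simp [pow_succ]; ring
          _ ≤ (1 - c) ^ (i + 1) * (q e i e / (1 - s)) := by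
              exact mul_le_mul_of_nonneg_left hmono (le_of_lt (pow_pos h1c _))
          _ = (1 - c) ^ (i + 1) * q e (i + 1) e := by rw [hnext]
    have hfin : p e ≤ (1 - c) ^ (N e) := by
      have := key (N e) le_rfl
      rw [(hdeclare e hpe).1, mul_one] at this
      exact this
    have hlog : Real.logb 2 (p e) ≤ (N e : ℝ) * Real.logb 2 (1 - c) := by
      have := Real.logb_le_logb_of_le (b := 2) (by norm_num) hpe hfin
      rwa [Real.logb_pow] at this
    have hNL : (N e : ℝ) * L ≤ Real.logb 2 (1 / p e) := by
      rw [one_div, Real.logb_inv, hLval]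
      nlinarith
    calc p e * (N e : ℝ) * L = p e * ((N e : ℝ) * L) := by ring
      _ ≤ p e * Real.logb 2 (1 / p e) :=
          mul_le_mul_of_nonneg_left hNL (hp e)
end

section
/- In the nested hypergraph on n nodes (edges e_i = {v_1,...,v_i}, uniform distribution 1/n), any non-adaptive strategy with error probability at most k/(2n) must use at least n - k - 1 tests. -/
open Finset

/-- In the nested hypergraph on `n` nodes (edges `e_i = {v_1,…,v_i}`, uniform
distribution `1/n`), any non-adaptive strategy with `l` tests and error probability at
most `k/(2n)` must use at least `n - k - 1` tests. -/
theorem stmt9 (n l k : ℕ) (hn : 0 < n)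
    (T : Fin l → Finset (Fin n)) (dec : (Fin l → Bool) → Finset (Fin n))
    (herr :
      ((Finset.univ.filter (fun i : Fin n =>
          dec (fun j => decide ((T j ∩ Finset.univ.filter (fun v => v ≤ i)).Nonempty)) ≠
            Finset.univ.filter (fun v => v ≤ i))).card : ℝ) / n ≤ (k : ℝ) / (2 * n)) :
    (n : ℝ) - k - 1 ≤ (l : ℝ) := by
  classical
  set P : Fin n → Prop := fun i =>
    dec (fun j => decide ((T j ∩ Finset.univ.filter (fun v => v ≤ i)).Nonempty)) ≠
      Finset.univ.filter (fun v => v ≤ i) with hP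
  set Err := Finset.univ.filter P with hErr
  set S := Finset.univ.filter (fun i => ¬ P i) with hS
  -- cardinalities add up
  have hsplit : Err.card + S.card = n := by
    have := Finset.card_filter_add_card_filter_not (s := (Finset.univ : Finset (Fin n)))
      (p := P)
    simpa [hErr, hS] using this
  -- weight function
  set w : Fin n → ℕ := fun i =>
    (Finset.univ.filter (fun j : Fin l =>
      (T j ∩ Finset.univ.filter (fun v => v ≤ i)).Nonempty)).card with hw
  have hwmono : ∀ i i' : Fin n, i ≤ i' →
      (Finset.univ.filter (fun j : Fin l =>
        (T j ∩ Finset.univ.filter (fun v => v ≤ i)).Nonempty)) ⊆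
      (Finset.univ.filter (fun j : Fin l =>
        (T j ∩ Finset.univ.filter (fun v => v ≤ i')).Nonempty)) := by
    intro i i' hii
    intro j hj
    simp only [Finset.mem_filter, Finset.mem_univ, true_and] at hj ⊢
    obtain ⟨x, hx⟩ := hj
    refine ⟨x, ?_⟩
    simp only [Finset.mem_inter, Finset.mem_filter, Finset.mem_univ, true_and] at hx ⊢
    exact ⟨hx.1, le_trans hx.2 hii⟩
  -- w is injective on S
  have hinj : Set.InjOn w S := by
    intro i hi i' hi' hww
    wlog hii : i ≤ i' generalizing i i'
    · exact (this hi' hi hww.symm (le_of_not_ge hii)).symm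
    -- filter sets equal
    have hsub := hwmono i i' hii
    have heqf : (Finset.univ.filter (fun j : Fin l =>
        (T j ∩ Finset.univ.filter (fun v => v ≤ i)).Nonempty)) =
        (Finset.univ.filter (fun j : Fin l =>
        (T j ∩ Finset.univ.filter (fun v => v ≤ i')).Nonempty)) :=
      Finset.eq_of_subset_of_card_le hsub (le_of_eq hww.symm)
    have hsigeq : (fun j => decide ((T j ∩ Finset.univ.filter (fun v => v ≤ i)).Nonempty)) =
        (fun j => decide ((T j ∩ Finset.univ.filter (fun v => v ≤ i')).Nonempty)) := by
      funext j
      have : ((T j ∩ Finset.univ.filter (fun v => v ≤ i)).Nonempty) ↔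
          ((T j ∩ Finset.univ.filter (fun v => v ≤ i')).Nonempty) := by
        constructor
        · intro h
          have hj : j ∈ Finset.univ.filter (fun j : Fin l =>
              (T j ∩ Finset.univ.filter (fun v => v ≤ i)).Nonempty) := by
            simp [h]
          rw [heqf] at hj
          simpa using hj
        · intro h
          have hj : j ∈ Finset.univ.filter (fun j : Fin l =>
              (T j ∩ Finset.univ.filter (fun v => v ≤ i')).Nonempty) := by
            simp [h]
          rw [← heqf] at hj
          simpa using hj
      simp [this]
    simp only [hS, Finset.mem_coe, Finset.mem_filter, Finset.mem_univ, true_and, hP,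
      not_not] at hi hi'
    have hfil : Finset.univ.filter (fun v => v ≤ i) = Finset.univ.filter (fun v => v ≤ i') := by
      rw [← hi, ← hi', hsigeq]
    have h1 : i ≤ i' := by
      have : i ∈ Finset.univ.filter (fun v => v ≤ i') := by
        rw [← hfil]; simp
      simpa using this
    have h2 : i' ≤ i := by
      have : i' ∈ Finset.univ.filter (fun v => v ≤ i) := by
        rw [hfil]; simp
      simpa using this
    exact le_antisymm h1 h2
  -- card S ≤ l + 1
  have hScard : S.card ≤ l + 1 := by
    have hmap : ∀ i ∈ S, w i ∈ Finset.range (l + 1) := by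
      intro i _
      simp only [Finset.mem_range, Nat.lt_succ_iff, hw]
      calc (Finset.univ.filter (fun j : Fin l =>
          (T j ∩ Finset.univ.filter (fun v => v ≤ i)).Nonempty)).card
          ≤ (Finset.univ : Finset (Fin l)).card := Finset.card_le_card (Finset.filter_subset _ _)
        _ = l := by simp
    calc S.card ≤ (Finset.range (l + 1)).card :=
          Finset.card_le_card_of_injOn w hmap hinj
      _ = l + 1 := by simp
  -- Err ≤ k
  have hErrk : (Err.card : ℝ) ≤ k := by
    have hn' : (0 : ℝ) < n := by exact_mod_cast hn
    rw [div_le_div_iff₀ hn' (by positivity)] at herr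
    nlinarith [herr]
  have hsplit' : (Err.card : ℝ) + S.card = n := by exact_mod_cast hsplit
  have hS' : (S.card : ℝ) ≤ l + 1 := by exact_mod_cast hScard
  linarith
end
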